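/- arXiv:1907.02667 — 3 statements merged into one kernel-verified Lean document; each statement's English description precedes it below -/
import Mathlib

section
/- Let ρ : [0,∞) → [0,∞) be a non-negative, non-decreasing continuous function with ρ(t) = 0 iff t = 0 and ∫_{0+} ds/ρ(s) = ∞. Let u, g be non-negative continuous functions on [0,∞) with ∫_0^t g(s) ds < ∞ for all t. If u(t) ≤ ∫_0^t g(s)ρ(u(s)) ds for all t ≥ 0, then u(t) = 0 for all t ≥ 0. -/
/-!
Put `v(t) = ∫₀ᵗ g ρ(u)`, so `u ≤ v`. For `ε > 0` the function `w = ε + v` is positive with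
`w' = g ρ(u) ≤ g ρ(w)`, and substituting `y = w(s)` gives `∫_ε^{ε + v(t)} dy/ρ(y) ≤ ∫₀ᵗ g`.
If `u(t) > 0` then `v(t) > 0`, and these bounds, uniform in `ε`, make `1/ρ` integrable on
`(0, v(t)]`, against the Osgood condition.
-/

open MeasureTheory Set Filter Topology intervalIntegral

theorem integral_one_div_le_integral_of_deriv_le {ρ g w w' : ℝ → ℝ} {a b : ℝ} (hab : a ≤ b)
    (hρc : ContinuousOn ρ (Ioi 0)) (hρpos : ∀ y > 0, 0 < ρ y)
    (hwc : ContinuousOn w (Icc a b)) (hwpos : ∀ x ∈ Icc a b, 0 < w x)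
    (hw' : ∀ x ∈ Ioo a b, HasDerivAt w (w' x) x) (hw'c : ContinuousOn w' (Icc a b))
    (hg : ContinuousOn g (Icc a b)) (hle : ∀ x ∈ Icc a b, w' x ≤ g x * ρ (w x)) :
    ∫ y in w a..w b, 1 / ρ y ≤ ∫ x in a..b, g x := by
  have hinv : ContinuousOn (fun y => 1 / ρ y) (Ioi 0) :=
    continuousOn_const.div hρc fun y hy => (hρpos y hy).ne'
  have hmaps : MapsTo w (Icc a b) (Ioi 0) := fun x hx => hwpos x hx
  rw [← integral_comp_mul_deriv'' (by rwa [uIcc_of_le hab])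
    (fun x hx => (hw' x (by simpa [hab] using hx)).hasDerivWithinAt) (by rwa [uIcc_of_le hab])
    (hinv.mono (by rw [uIcc_of_le hab]; exact hmaps.image_subset))]
  refine integral_mono_on hab (((hinv.comp hwc hmaps).mul hw'c).intervalIntegrable_of_Icc hab)
    (hg.intervalIntegrable_of_Icc hab) fun x hx => ?_
  rw [Function.comp_apply, one_div_mul_eq_div, div_le_iff₀ (hρpos _ (hwpos x hx))]
  exact hle x hx

theorem integrableOn_Ioc_of_forall_intervalIntegral_le {f : ℝ → ℝ} {a b C : ℝ}
    (hf : ∀ x ∈ Ioc a b, 0 ≤ f x) (hfi : ∀ ε ∈ Ioc a b, IntervalIntegrable f volume ε b)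
    (hC : ∀ ε ∈ Ioc a b, ∫ x in ε..b, f x ≤ C) : IntegrableOn f (Ioc a b) := by
  rcases le_or_gt b a with hba | hab
  · simp [Ioc_eq_empty_of_le hba]
  set e : ℕ → ℝ := fun n => a + (b - a) * (1 / (n + 1))
  have he : ∀ n, e n ∈ Ioc a b := fun n => by
    have h₀ : (0 : ℝ) < 1 / (n + 1) := by positivity
    have h₁ : 1 / ((n : ℝ) + 1) ≤ 1 := div_le_one_of_le₀ (by simp) (by positivity)
    constructor <;> nlinarith
  have he_lim : Tendsto e atTop (𝓝 a) := by
    simpa [e] using (tendsto_one_div_add_atTop_nhds_zero_nat.const_mul (b - a)).const_add a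
  refine integrableOn_Ioc_of_intervalIntegral_norm_bounded_left (I := C) (fun n => (hfi _ (he n)).1)
    he_lim (Eventually.of_forall fun n => ?_)
  rw [← integral_of_le (he n).2, ← intervalIntegral.integral_congr fun x hx => ?_]
  · exact hC _ (he n)
  · rw [uIcc_of_le (he n).2] at hx
    exact (Real.norm_of_nonneg (hf x ⟨(he n).1.trans_le hx.1, hx.2⟩)).symm

theorem integral_one_div_le_integral_of_le_integral {ρ u g : ℝ → ℝ}
    (hρc : ContinuousOn ρ (Ici 0)) (hρnonneg : ∀ y ≥ 0, 0 ≤ ρ y) (hρpos : ∀ y > 0, 0 < ρ y)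
    (hρmono : MonotoneOn ρ (Ici 0)) (hu : ContinuousOn u (Ici 0)) (hunonneg : ∀ t ≥ 0, 0 ≤ u t)
    (hg : ContinuousOn g (Ici 0)) (hgnonneg : ∀ t ≥ 0, 0 ≤ g t)
    (hbound : ∀ t ≥ 0, u t ≤ ∫ s in 0..t, g s * ρ (u s)) {ε t : ℝ} (hε : 0 < ε) (ht : 0 ≤ t) :
    ∫ y in ε..ε + ∫ s in 0..t, g s * ρ (u s), 1 / ρ y ≤ ∫ s in 0..t, g s := by
  set F : ℝ → ℝ := fun s => g s * ρ (u s)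
  have hFc : ContinuousOn F (Ici 0) := hg.mul (hρc.comp hu fun s hs => hunonneg s hs)
  have hv_nonneg : ∀ s ≥ 0, 0 ≤ ∫ r in 0..s, F r := fun s hs =>
    integral_nonneg hs fun x hx => mul_nonneg (hgnonneg x hx.1) (hρnonneg _ (hunonneg x hx.1))
  have hvc : ContinuousOn (fun s => ∫ r in 0..s, F r) (Icc 0 t) := by
    simpa [uIcc_of_le ht] using continuousOn_primitive_interval'
      ((hFc.mono Icc_subset_Ici_self).intervalIntegrable_of_Icc ht) left_mem_uIcc
  have hv' : ∀ x ∈ Ioo 0 t, HasDerivAt (fun s => ε + ∫ r in 0..s, F r) (F x) x := fun x hx =>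
    (integral_hasDerivAt_right ((hFc.mono Icc_subset_Ici_self).intervalIntegrable_of_Icc hx.1.le)
      ((hFc.mono Ioi_subset_Ici_self).stronglyMeasurableAtFilter isOpen_Ioi x hx.1)
      (hFc.continuousAt (Ici_mem_nhds hx.1))).const_add ε
  have hle : ∀ x ∈ Icc 0 t, F x ≤ g x * ρ (ε + ∫ r in 0..x, F r) := fun x hx => by
    have hv := hv_nonneg x hx.1
    have hux : u x ≤ ε + ∫ r in 0..x, F r := by linarith [hbound x hx.1]
    exact mul_le_mul_of_nonneg_left
      (hρmono (hunonneg x hx.1) (show (0 : ℝ) ≤ _ by linarith) hux) (hgnonneg x hx.1)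
  simpa using integral_one_div_le_integral_of_deriv_le (w := fun s => ε + ∫ r in 0..s, F r) ht
    (hρc.mono Ioi_subset_Ici_self) hρpos (continuousOn_const.add hvc) (fun x hx => by linarith [hv_nonneg x hx.1]) hv'
    (hFc.mono Icc_subset_Ici_self) (hg.mono Icc_subset_Ici_self) hle

theorem bihari_vanishing_general
    (ρ u g : ℝ → ℝ)
    (hρc : ContinuousOn ρ (Set.Ici 0))
    (hρnonneg : ∀ t ≥ (0:ℝ), 0 ≤ ρ t)
    (hρmono : MonotoneOn ρ (Set.Ici 0))
    (hρzero : ∀ t ≥ (0:ℝ), (ρ t = 0 ↔ t = 0))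
    (hOsgood : ∀ a > (0:ℝ),
      ¬ IntervalIntegrable (fun s => 1 / ρ s) MeasureTheory.volume 0 a)
    (hu : ContinuousOn u (Set.Ici 0)) (hunonneg : ∀ t ≥ (0:ℝ), 0 ≤ u t)
    (hg : ContinuousOn g (Set.Ici 0)) (hgnonneg : ∀ t ≥ (0:ℝ), 0 ≤ g t)
    (hbound : ∀ t ≥ (0:ℝ), u t ≤ ∫ s in (0:ℝ)..t, g s * ρ (u s)) :
    ∀ t ≥ (0:ℝ), u t = 0 := by
  intro t ht
  by_contra hne
  have hρpos : ∀ y > 0, 0 < ρ y := fun y hy =>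
    (hρnonneg y hy.le).lt_of_ne' fun h => hy.ne' ((hρzero y hy.le).1 h)
  have hinv : ContinuousOn (fun y => 1 / ρ y) (Ioi 0) :=
    continuousOn_const.div (hρc.mono Ioi_subset_Ici_self) fun y hy => (hρpos y hy).ne'
  set a := ∫ s in 0..t, g s * ρ (u s)
  have ha : 0 < a := ((hunonneg t ht).lt_of_ne' hne).trans_le (hbound t ht)
  have hinv_nonneg : ∀ y > 0, 0 ≤ 1 / ρ y := fun y hy => (one_div_pos.2 (hρpos y hy)).le
  have hinv_int : ∀ c > 0, ∀ d > 0, IntervalIntegrable (fun y => 1 / ρ y) volume c d :=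
    fun c hc d hd => (hinv.mono fun y hy => (lt_min hc hd).trans_le hy.1).intervalIntegrable
  have hbihari : ∀ ε ∈ Ioc 0 a, ∫ y in ε..a, 1 / ρ y ≤ ∫ s in 0..t, g s := fun ε hε =>
    (integral_mono_interval le_rfl hε.2 (by linarith [hε.1])
      ((ae_restrict_mem measurableSet_Ioc).mono fun y hy => hinv_nonneg y (hε.1.trans hy.1))
      (hinv_int ε hε.1 _ (by linarith [hε.1]))).trans
    (integral_one_div_le_integral_of_le_integral hρc hρnonneg hρpos hρmono hu hunonneg hg hgnonneg hbound
      hε.1 ht)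
  exact hOsgood a ha ((intervalIntegrable_iff_integrableOn_Ioc_of_le ha.le).2 <|
    integrableOn_Ioc_of_forall_intervalIntegral_le (fun y hy => hinv_nonneg y hy.1)
      (fun ε hε => hinv_int ε hε.1 a ha) hbihari)

/-- Vanishing case of the Bihari–LaSalle inequality (`f ≡ 0`):
if `u(t) ≤ ∫_0^t g(s) ρ(u(s)) ds` for all `t ≥ 0`, then `u ≡ 0`. -/
theorem bihari_vanishing
    (ρ u g : ℝ → ℝ)
    (hρc : ContinuousOn ρ (Set.Ici 0))
    (hρnonneg : ∀ t ≥ (0:ℝ), 0 ≤ ρ t)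
    (hρmono : MonotoneOn ρ (Set.Ici 0))
    (hρzero : ∀ t ≥ (0:ℝ), (ρ t = 0 ↔ t = 0))
    (hOsgood : ∀ a > (0:ℝ),
      ¬ IntervalIntegrable (fun s => 1 / ρ s) MeasureTheory.volume 0 a)
    (hu : ContinuousOn u (Set.Ici 0)) (hunonneg : ∀ t ≥ (0:ℝ), 0 ≤ u t)
    (hg : ContinuousOn g (Set.Ici 0)) (hgnonneg : ∀ t ≥ (0:ℝ), 0 ≤ g t)
    (hgint : ∀ t ≥ (0:ℝ), IntervalIntegrable g MeasureTheory.volume 0 t)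
    (hbound : ∀ t ≥ (0:ℝ), u t ≤ ∫ s in (0:ℝ)..t, g s * ρ (u s)) :
    ∀ t ≥ (0:ℝ), u t = 0 :=
  bihari_vanishing_general ρ u g hρc hρnonneg hρmono hρzero hOsgood hu hunonneg hg hgnonneg hbound
end

section
/- Let α > 1 and let ψ : [0,∞) → [0,∞) be continuously differentiable with |ψ'(r)| ≤ 1 for all r > 0. Then for all x, c ∈ ℝ: ψ(|x + c|^α) − ψ(|x|^α) ≤ α(2^{α−2} + 1)(|x|^{α−1}|c| + |c|^α). -/
/-!
Put `g r = ψ (r ^ α)`. By the chain rule `|g' ξ| ≤ α ξ ^ (α - 1)` for `ξ > 0`, which is all the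
mean value theorem between `|x|` and `|x + c|` needs, since its intermediate point lies strictly
between two nonnegative numbers. As `||x + c| - |x|| ≤ |c|`, the left-hand side is at most
`α (|x| + |c|) ^ (α - 1) |c|`. Finally the power mean inequality
`(A + B) ^ p ≤ 2 ^ (p - 1) (A ^ p + B ^ p)` for `p ≥ 1`, and subadditivity of `t ↦ t ^ p` for
`p ≤ 1`, split `(|x| + |c|) ^ (α - 1)`.
-/

open Set

namespace Real

lemma rpow_add_le_mul_rpow_add_rpow {p a b : ℝ} (ha : 0 ≤ a) (hb : 0 ≤ b) (hp : 1 ≤ p) :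
    (a + b) ^ p ≤ 2 ^ (p - 1) * (a ^ p + b ^ p) := by
  lift a to NNReal using ha
  lift b to NNReal using hb
  exact_mod_cast NNReal.rpow_add_le_mul_rpow_add_rpow a b hp

lemma rpow_add_le_two_rpow_sub_one_add_one_mul {p a b : ℝ} (ha : 0 ≤ a) (hb : 0 ≤ b)
    (hp : 0 ≤ p) : (a + b) ^ p ≤ (2 ^ (p - 1) + 1) * (a ^ p + b ^ p) := by
  have hsum : 0 ≤ a ^ p + b ^ p := by positivity
  have htwo : (0 : ℝ) ≤ 2 ^ (p - 1) := by positivity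
  rcases le_total p 1 with hp1 | hp1
  · calc (a + b) ^ p ≤ a ^ p + b ^ p := rpow_add_le_add_rpow ha hb hp hp1
      _ ≤ (2 ^ (p - 1) + 1) * (a ^ p + b ^ p) := le_mul_of_one_le_left hsum (by linarith)
  · calc (a + b) ^ p ≤ 2 ^ (p - 1) * (a ^ p + b ^ p) := rpow_add_le_mul_rpow_add_rpow ha hb hp1
      _ ≤ (2 ^ (p - 1) + 1) * (a ^ p + b ^ p) := by gcongr; linarith

end Real

lemma abs_sub_le_of_abs_deriv_le_on_uIoo {f : ℝ → ℝ} (hf : Differentiable ℝ f) {a b K : ℝ}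
    (hK : ∀ ξ ∈ uIoo a b, |deriv f ξ| ≤ K) : |f b - f a| ≤ K * |b - a| := by
  wlog hab : a < b generalizing a b
  · rcases (not_lt.mp hab).eq_or_lt with rfl | hba
    · simp
    · rw [abs_sub_comm, abs_sub_comm b]
      exact this (uIoo_comm a b ▸ hK) hba
  obtain ⟨ξ, hξ, hslope⟩ := exists_deriv_eq_slope f hab hf.continuous.continuousOn
    hf.differentiableOn
  have hba : 0 < b - a := sub_pos.mpr hab
  rw [eq_div_iff hba.ne'] at hslope
  rw [← hslope, abs_mul, abs_of_pos hba]
  gcongr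
  exact hK ξ (Ioo_subset_uIoo hξ)

lemma abs_deriv_comp_rpow_le {ψ : ℝ → ℝ} (hψ : Differentiable ℝ ψ) {L : ℝ}
    (hψ' : ∀ r > 0, |deriv ψ r| ≤ L) {α ξ : ℝ} (hα : 0 ≤ α) (hξ : 0 < ξ) :
    |deriv (fun r => ψ (r ^ α)) ξ| ≤ L * (α * ξ ^ (α - 1)) := by
  have hchain : HasDerivAt (fun r => ψ (r ^ α)) (deriv ψ (ξ ^ α) * (α * ξ ^ (α - 1))) ξ :=
    (hψ _).hasDerivAt.comp ξ (Real.hasDerivAt_rpow_const (Or.inl hξ.ne'))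
  rw [hchain.deriv, abs_mul, abs_of_nonneg (by positivity : 0 ≤ α * ξ ^ (α - 1))]
  gcongr
  exact hψ' _ (Real.rpow_pos_of_pos hξ α)

lemma abs_sub_comp_rpow_le {ψ : ℝ → ℝ} (hψ : Differentiable ℝ ψ) {L : ℝ}
    (hψ' : ∀ r > 0, |deriv ψ r| ≤ L) {α a b : ℝ} (hα : 1 ≤ α) (ha : 0 ≤ a) (hb : 0 ≤ b) :
    |ψ (b ^ α) - ψ (a ^ α)| ≤ L * (α * max a b ^ (α - 1)) * |b - a| := by
  have hL : 0 ≤ L := (abs_nonneg _).trans (hψ' 1 one_pos)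
  refine abs_sub_le_of_abs_deriv_le_on_uIoo (hψ.comp (Real.differentiable_rpow_const hα)) ?_
  rintro ξ ⟨hξmin, hξmax⟩
  have hξ : 0 < ξ := (le_min ha hb).trans_lt hξmin
  calc |deriv (fun r => ψ (r ^ α)) ξ| ≤ L * (α * ξ ^ (α - 1)) :=
        abs_deriv_comp_rpow_le hψ hψ' (by linarith) hξ
    _ ≤ L * (α * max a b ^ (α - 1)) := by
        have : 0 ≤ α - 1 := by linarith
        gcongr

/-- Case II jump estimate: if `α > 1` and `ψ` is continuously differentiable
with `|ψ'(r)| ≤ 1` for `r > 0`, then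
`ψ(|x+c|^α) − ψ(|x|^α) ≤ α(2^{α−2}+1)(|x|^{α−1}|c| + |c|^α)`. -/
theorem jump_estimate_case_two
    (α : ℝ) (hα : 1 < α)
    (ψ : ℝ → ℝ) (hψ : ContDiff ℝ 1 ψ)
    (hψ' : ∀ r > (0:ℝ), |deriv ψ r| ≤ 1) :
    ∀ x c : ℝ,
      ψ (|x + c| ^ α) - ψ (|x| ^ α)
        ≤ α * ((2:ℝ) ^ (α - 2) + 1) * (|x| ^ (α - 1) * |c| + |c| ^ α) := by
  intro x c
  have hmax : max |x| |x + c| ≤ |x| + |c| := max_le (by simp) (abs_add_le x c)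
  have hcα : |c| ^ (α - 1) * |c| = |c| ^ α := by
    rw [← Real.rpow_add_one' (abs_nonneg c) (by linarith), sub_add_cancel]
  calc ψ (|x + c| ^ α) - ψ (|x| ^ α) ≤ |ψ (|x + c| ^ α) - ψ (|x| ^ α)| := le_abs_self _
    _ ≤ 1 * (α * max |x| |x + c| ^ (α - 1)) * |(|x + c| - |x|)| :=
        abs_sub_comp_rpow_le (hψ.differentiable one_ne_zero) hψ' hα.le (abs_nonneg _)
          (abs_nonneg _)
    _ ≤ α * (|x| + |c|) ^ (α - 1) * |c| := by
        rw [one_mul]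
        have : 0 ≤ α - 1 := by linarith
        gcongr α * ?_ ^ _ * ?_
        simpa using abs_abs_sub_abs_le (x + c) x
    _ ≤ α * ((2 ^ (α - 2) + 1) * (|x| ^ (α - 1) + |c| ^ (α - 1))) * |c| := by
        gcongr α * ?_ * |c|
        simpa [show α - 1 - 1 = α - 2 by ring] using
          Real.rpow_add_le_two_rpow_sub_one_add_one_mul (abs_nonneg x) (abs_nonneg c)
            (p := α - 1) (by linarith)
    _ = α * (2 ^ (α - 2) + 1) * (|x| ^ (α - 1) * |c| + |c| ^ α) := by rw [← hcα]; ring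
end

section
/- Let b(x) = −x ln x for x ∈ (0, 1/e). Then for all 0 < x, y < 1/e: |b(x) − b(y)| ≤ b(|x − y|), i.e., |x ln x − y ln y| ≤ −|x−y| ln |x−y|. -/
/-!
Write `b = Real.negMulLog`. For `x ≤ y` the estimate splits into two facts: `b` is increasing
on `[0, 1/e]` (its derivative `-log t - 1` is nonnegative there), so the absolute value is
`b y - b x`; and `b` is subadditive on `[0, ∞)` because `log` is increasing, so
`b y = b (x + (y - x)) ≤ b x + b (y - x)`.
-/

open Real Set

namespace Real

lemma mul_log_le_mul_log_add {x y : ℝ} (hx : 0 ≤ x) (hy : 0 ≤ y) :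
    x * log x ≤ x * log (x + y) := by
  rcases hx.eq_or_lt with rfl | hx
  · simp
  gcongr
  linarith

lemma negMulLog_add_le {x y : ℝ} (hx : 0 ≤ x) (hy : 0 ≤ y) :
    negMulLog (x + y) ≤ negMulLog x + negMulLog y := by
  have hlog_x := mul_log_le_mul_log_add hx hy
  have hlog_y := mul_log_le_mul_log_add hy hx
  rw [add_comm y] at hlog_y
  simp only [negMulLog]
  linear_combination hlog_x + hlog_y

lemma monotoneOn_negMulLog : MonotoneOn negMulLog (Icc 0 (exp (-1))) := by
  refine monotoneOn_of_deriv_nonneg (convex_Icc _ _) continuous_negMulLog.continuousOn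
    (differentiableOn_negMulLog.mono fun t ht => ?_) fun t ht => ?_
  all_goals rw [interior_Icc] at ht
  · exact ht.1.ne'
  · have hlog : log t < -1 := by simpa using log_lt_log ht.1 ht.2
    rw [deriv_negMulLog ht.1.ne']
    linarith

theorem abs_negMulLog_sub_le {x y : ℝ} (hx : x ∈ Icc 0 (exp (-1))) (hy : y ∈ Icc 0 (exp (-1))) :
    |negMulLog x - negMulLog y| ≤ negMulLog |x - y| := by
  wlog hxy : x ≤ y generalizing x y
  · rw [abs_sub_comm, abs_sub_comm x]
    exact this hy hx (le_of_not_ge hxy)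
  have hmono : negMulLog x ≤ negMulLog y := monotoneOn_negMulLog hx hy hxy
  have hsub := negMulLog_add_le hx.1 (sub_nonneg.2 hxy)
  rw [add_sub_cancel] at hsub
  rw [abs_sub_comm, abs_of_nonneg (sub_nonneg.2 hmono), abs_sub_comm,
    abs_of_nonneg (sub_nonneg.2 hxy)]
  linarith

end Real

/-- Modulus-of-continuity estimate for the non-Lipschitz drift `b(x) = −x ln x`:
for `0 < x, y < 1/e`, `|x ln x − y ln y| ≤ −|x−y| ln |x−y|`. -/
theorem neg_mul_log_modulus (x y : ℝ)
    (hx0 : 0 < x) (hx1 : x < Real.exp (-1))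
    (hy0 : 0 < y) (hy1 : y < Real.exp (-1)) :
    |x * Real.log x - y * Real.log y| ≤ -(|x - y|) * Real.log |x - y| := by
  calc |x * Real.log x - y * Real.log y|
      = |Real.negMulLog x - Real.negMulLog y| := by
        rw [← abs_neg]
        simp only [Real.negMulLog]
        ring_nf
    _ ≤ Real.negMulLog |x - y| :=
        Real.abs_negMulLog_sub_le ⟨hx0.le, hx1.le⟩ ⟨hy0.le, hy1.le⟩
end
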